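/- In the setting of the joint smoothness lemma: for all x, x' and y, y' with ‖y‖, ‖y'‖ ≤ D_y, the x-partial gradient satisfies ‖∇_x f₀(x,y) - ∇_x f₀(x',y')‖² ≤ (2L_g² + 4L_ℓ²D_y²)‖x - x'‖² + 4G_ℓ²‖y - y'‖². -/

import Mathlib

open RealInnerProductSpace

/-! Write the difference as `(g' x - g' x') - ((Dℓ x - Dℓ x')† y + (Dℓ x')† (y - y'))`; the adjoint
is an isometry, so the three pieces are bounded by `Lg‖x - x'‖`, `Lℓ‖x - x'‖Dy` and `Gℓ‖y - y'‖`,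
and `(a + b + c)² ≤ 2a² + 4b² + 4c²` gives the constants. -/

theorem add_add_sq_le (a b c : ℝ) : (a + b + c) ^ 2 ≤ 2 * a ^ 2 + 4 * b ^ 2 + 4 * c ^ 2 := by
  nlinarith [sq_nonneg (a - b - c), sq_nonneg (b - c)]

theorem ContinuousLinearMap.norm_apply_sub_apply_le {𝕜 E F : Type*} [NontriviallyNormedField 𝕜]
    [SeminormedAddCommGroup E] [SeminormedAddCommGroup F] [NormedSpace 𝕜 E] [NormedSpace 𝕜 F]
    (B B' : E →L[𝕜] F) (y y' : E) :
    ‖B y - B' y'‖ ≤ ‖B - B'‖ * ‖y‖ + ‖B'‖ * ‖y - y'‖ := by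
  have hsplit : B y - B' y' = (B - B') y + B' (y - y') := by
    rw [sub_apply, map_sub]
    abel
  rw [hsplit]
  exact norm_add_le_of_le ((B - B').le_opNorm y) (B'.le_opNorm (y - y'))

theorem ContinuousLinearMap.norm_adjoint_apply_sub_adjoint_apply_le {𝕜 E F : Type*} [RCLike 𝕜]
    [NormedAddCommGroup E] [NormedAddCommGroup F] [InnerProductSpace 𝕜 E]
    [InnerProductSpace 𝕜 F] [CompleteSpace E] [CompleteSpace F]
    (A A' : E →L[𝕜] F) (y y' : F) :
    ‖adjoint A y - adjoint A' y'‖ ≤ ‖A - A'‖ * ‖y‖ + ‖A'‖ * ‖y - y'‖ := by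
  have hnorm (B : E →L[𝕜] F) : ‖adjoint B‖ = ‖B‖ := adjoint.norm_map B
  simpa only [← map_sub, hnorm] using norm_apply_sub_apply_le (adjoint A) (adjoint A') y y'

theorem stmt_7_general (d m : ℕ) (Lg Gℓ Lℓ Dy : ℝ)
    (g' : EuclideanSpace ℝ (Fin d) → EuclideanSpace ℝ (Fin d))
    (Dℓ : EuclideanSpace ℝ (Fin d) → (EuclideanSpace ℝ (Fin d) →L[ℝ] EuclideanSpace ℝ (Fin m)))
    (hgL : ∀ x x', ‖g' x - g' x'‖ ≤ Lg * ‖x - x'‖)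
    (hGℓ : ∀ x, ‖Dℓ x‖ ≤ Gℓ)
    (hLℓ : ∀ x x', ‖Dℓ x - Dℓ x'‖ ≤ Lℓ * ‖x - x'‖) :
    ∀ x x' : EuclideanSpace ℝ (Fin d), ∀ y y' : EuclideanSpace ℝ (Fin m),
      ‖y‖ ≤ Dy → ‖y'‖ ≤ Dy →
      ‖(g' x - ContinuousLinearMap.adjoint (Dℓ x) y) -
        (g' x' - ContinuousLinearMap.adjoint (Dℓ x') y')‖ ^ 2 ≤
      (2 * Lg ^ 2 + 4 * Lℓ ^ 2 * Dy ^ 2) * ‖x - x'‖ ^ 2 + 4 * Gℓ ^ 2 * ‖y - y'‖ ^ 2 := by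
  intro x x' y y' hy _
  have hadj : ‖ContinuousLinearMap.adjoint (Dℓ x) y - ContinuousLinearMap.adjoint (Dℓ x') y'‖ ≤
      Lℓ * ‖x - x'‖ * Dy + Gℓ * ‖y - y'‖ :=
    (ContinuousLinearMap.norm_adjoint_apply_sub_adjoint_apply_le _ _ y y').trans <|
      add_le_add
        (mul_le_mul (hLℓ x x') hy (norm_nonneg y) ((norm_nonneg _).trans (hLℓ x x')))
        (mul_le_mul_of_nonneg_right (hGℓ x') (norm_nonneg _))
  have hdiff : ‖(g' x - ContinuousLinearMap.adjoint (Dℓ x) y) -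
      (g' x' - ContinuousLinearMap.adjoint (Dℓ x') y')‖ ≤
      Lg * ‖x - x'‖ + Lℓ * ‖x - x'‖ * Dy + Gℓ * ‖y - y'‖ := by
    rw [sub_sub_sub_comm, add_assoc]
    exact norm_sub_le_of_le (hgL x x') hadj
  calc _ ≤ (Lg * ‖x - x'‖ + Lℓ * ‖x - x'‖ * Dy + Gℓ * ‖y - y'‖) ^ 2 :=
        pow_le_pow_left₀ (norm_nonneg _) hdiff 2
    _ ≤ 2 * (Lg * ‖x - x'‖) ^ 2 + 4 * (Lℓ * ‖x - x'‖ * Dy) ^ 2 + 4 * (Gℓ * ‖y - y'‖) ^ 2 :=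
        add_add_sq_le _ _ _
    _ = _ := by ring

theorem stmt_7 (d m : ℕ) (Lg Gℓ Lℓ Dy : ℝ)
    (g : EuclideanSpace ℝ (Fin d) → ℝ) (g' : EuclideanSpace ℝ (Fin d) → EuclideanSpace ℝ (Fin d))
    (ℓ : EuclideanSpace ℝ (Fin d) → EuclideanSpace ℝ (Fin m))
    (Dℓ : EuclideanSpace ℝ (Fin d) → (EuclideanSpace ℝ (Fin d) →L[ℝ] EuclideanSpace ℝ (Fin m)))
    (hg : ∀ x, HasGradientAt g (g' x) x)
    (hgL : ∀ x x', ‖g' x - g' x'‖ ≤ Lg * ‖x - x'‖)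
    (hℓ : ∀ x, HasFDerivAt ℓ (Dℓ x) x)
    (hGℓ : ∀ x, ‖Dℓ x‖ ≤ Gℓ)
    (hLℓ : ∀ x x', ‖Dℓ x - Dℓ x'‖ ≤ Lℓ * ‖x - x'‖) :
    ∀ x x' : EuclideanSpace ℝ (Fin d), ∀ y y' : EuclideanSpace ℝ (Fin m),
      ‖y‖ ≤ Dy → ‖y'‖ ≤ Dy →
      ‖(g' x - ContinuousLinearMap.adjoint (Dℓ x) y) -
        (g' x' - ContinuousLinearMap.adjoint (Dℓ x') y')‖ ^ 2 ≤
      (2 * Lg ^ 2 + 4 * Lℓ ^ 2 * Dy ^ 2) * ‖x - x'‖ ^ 2 + 4 * Gℓ ^ 2 * ‖y - y'‖ ^ 2 :=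
  stmt_7_general d m Lg Gℓ Lℓ Dy g' Dℓ hgL hGℓ hLℓ
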